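/- Fix α > 2, ζ > 0, ξ ≥ 0, n > 0 and R > 0, and assume ρ ≥ 0. Write f(z | λ) for the SINR PDF with density parameter λ. Then the approximated outage probability is nondecreasing in the network density: for all 0 < λ₁ ≤ λ₂, ∫_0^∞ W(z) f(z | λ₁) dz ≤ ∫_0^∞ W(z) f(z | λ₂) dz. (As the network density increases, the outage probability increases.) -/

import Mathlib

open MeasureTheory Set Real

/-!
`W` is `1` up to `ρ`, falls linearly to `0` on `[ρ, ϑ]` and vanishes afterwards, while
`f(· | λ) = -G'` for the complementary CDF `G(z) = exp (-ζ λ z^{2/α} - ξ z)`, with `G 0 = 1`.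
Integrating by parts, `∫ W f = 1 - (ϑ - ρ)⁻¹ ∫_ρ^ϑ G`: one minus the mean of `G` over `[ρ, ϑ]`.
Since `G` decreases pointwise as `λ` grows, the outage probability grows.
-/

noncomputable def ramp (ρ ϑ t : ℝ) : ℝ :=
  if t ≤ ρ then 1 else if t < ϑ then (ϑ - t) / (ϑ - ρ) else 0

section Survival

variable {G g : ℝ → ℝ} {a b : ℝ}

-- `g` may be singular at `a` (like `z^{2/α - 1}` at `0`); its sign alone makes it integrable.
theorem intervalIntegrable_of_hasDerivAt_neg (hab : a ≤ b) (hG : ContinuousOn G (Icc a b))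
    (hGg : ∀ x ∈ Ioo a b, HasDerivAt G (-g x) x) (hg : ∀ x ∈ Ioo a b, 0 ≤ g x) :
    IntervalIntegrable g volume a b := by
  rw [intervalIntegrable_iff_integrableOn_Ioc_of_le hab]
  exact intervalIntegral.integrableOn_deriv_of_nonneg hG.neg
    (fun x hx => by simpa using (hGg x hx).neg) hg

theorem integral_eq_sub_of_hasDerivAt_neg (hab : a ≤ b) (hG : ContinuousOn G (Icc a b))
    (hGg : ∀ x ∈ Ioo a b, HasDerivAt G (-g x) x) (hg : ∀ x ∈ Ioo a b, 0 ≤ g x) :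
    ∫ x in a..b, g x = G a - G b := by
  rw [intervalIntegral.integral_eq_sub_of_hasDeriv_right_of_le hab hG.neg
    (fun x hx => by simpa using (hGg x hx).neg.hasDerivWithinAt)
    (intervalIntegrable_of_hasDerivAt_neg hab hG hGg hg)]
  simp only [Pi.neg_apply]
  ring

theorem integral_sub_mul_eq_of_hasDerivAt_neg (hab : a ≤ b) (hG : ContinuousOn G (Icc a b))
    (hGg : ∀ x ∈ Ioo a b, HasDerivAt G (-g x) x) (hg : ∀ x ∈ Ioo a b, 0 ≤ g x) :
    ∫ x in a..b, (b - x) * g x = (b - a) * G a - ∫ x in a..b, G x := by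
  have hparts := intervalIntegral.integral_mul_deriv_eq_deriv_mul_of_hasDerivAt
    (u := fun x => b - x) (u' := fun _ => -1) (v' := fun x => -g x)
    (continuousOn_const.sub continuousOn_id) (by rwa [uIcc_of_le hab])
    (fun x _ => (hasDerivAt_id x).const_sub b |>.congr_deriv (by simp))
    (fun x hx => hGg x (by rwa [min_eq_left hab, max_eq_right hab] at hx))
    intervalIntegrable_const
    (intervalIntegrable_of_hasDerivAt_neg hab hG hGg hg).neg
  simp only [mul_neg, neg_one_mul, intervalIntegral.integral_neg, sub_self, zero_mul] at hparts
  linarith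

theorem integral_Ioi_ramp_mul (hG : ContinuousOn G (Ici 0))
    (hGg : ∀ x > 0, HasDerivAt G (-g x) x) (hg : ∀ x > 0, 0 ≤ g x)
    {ρ ϑ : ℝ} (hρ : 0 ≤ ρ) (hρϑ : ρ < ϑ) :
    ∫ z in Ioi 0, ramp ρ ϑ z * g z = G 0 - (∫ z in ρ..ϑ, G z) / (ϑ - ρ) := by
  have hG' : ∀ {a b}, 0 ≤ a → ContinuousOn G (Icc a b) := fun ha =>
    hG.mono fun x hx => le_trans ha hx.1
  have hGg' : ∀ {a b}, 0 ≤ a → ∀ x ∈ Ioo a b, HasDerivAt G (-g x) x :=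
    fun ha x hx => hGg x (ha.trans_lt hx.1)
  have hg' : ∀ {a b}, 0 ≤ a → ∀ x ∈ Ioo a b, 0 ≤ g x :=
    fun ha x hx => hg x (ha.trans_lt hx.1)
  have hϑ := hρ.trans hρϑ.le
  have hflat : EqOn (fun z => ramp ρ ϑ z * g z) g (uIoo 0 ρ) := fun z hz => by
    rw [uIoo_of_le hρ] at hz
    simp [ramp, hz.2.le]
  have hslope : EqOn (fun z => ramp ρ ϑ z * g z) (fun z => (ϑ - z) * g z / (ϑ - ρ))
      (uIoo ρ ϑ) := fun z hz => by
    rw [uIoo_of_le hρϑ.le] at hz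
    simp only [ramp, if_neg (not_le.2 hz.1), if_pos hz.2]
    ring
  have hint₁ : IntervalIntegrable g volume 0 ρ :=
    intervalIntegrable_of_hasDerivAt_neg hρ (hG' le_rfl) (hGg' le_rfl) (hg' le_rfl)
  have hint₂ : IntervalIntegrable (fun z => (ϑ - z) * g z / (ϑ - ρ)) volume ρ ϑ :=
    ((intervalIntegrable_of_hasDerivAt_neg hρϑ.le (hG' hρ) (hGg' hρ) (hg' hρ)).continuousOn_mul
      (continuousOn_const.sub continuousOn_id)).div_const _
  calc ∫ z in Ioi 0, ramp ρ ϑ z * g z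
      = ∫ z in (0)..ϑ, ramp ρ ϑ z * g z := by
        rw [intervalIntegral.integral_of_le hϑ]
        refine setIntegral_eq_of_subset_of_forall_sdiff_eq_zero measurableSet_Ioi
          Ioc_subset_Ioi_self fun z hz => ?_
        have hz : ϑ < z := lt_of_not_ge fun h => hz.2 ⟨hz.1, h⟩
        simp [ramp, (hρϑ.trans hz).not_ge, hz.not_gt]
    _ = (∫ z in (0)..ρ, g z) + ∫ z in ρ..ϑ, (ϑ - z) * g z / (ϑ - ρ) := by
        rw [← intervalIntegral.integral_add_adjacent_intervals (hint₁.congr_uIoo hflat.symm)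
          (hint₂.congr_uIoo hslope.symm), intervalIntegral.integral_congr_uIoo hflat,
          intervalIntegral.integral_congr_uIoo hslope]
    _ = G 0 - (∫ z in ρ..ϑ, G z) / (ϑ - ρ) := by
        rw [intervalIntegral.integral_div,
          integral_eq_sub_of_hasDerivAt_neg hρ (hG' le_rfl) (hGg' le_rfl) (hg' le_rfl),
          integral_sub_mul_eq_of_hasDerivAt_neg hρϑ.le (hG' hρ) (hGg' hρ) (hg' hρ)]
        field_simp [(sub_pos.2 hρϑ).ne']
        ring

end Survival

theorem hasDerivAt_exp_neg_mul_rpow_sub_mul {a p ξ z : ℝ} (hz : 0 < z) :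
    HasDerivAt (fun z => exp (-(a * z ^ p) - ξ * z))
      (-((a * p * z ^ (p - 1) + ξ) * exp (-(a * z ^ p) - ξ * z))) z := by
  have h : HasDerivAt (fun z => -(a * z ^ p) - ξ * z) (-(a * (p * z ^ (p - 1))) - ξ * 1) z :=
    ((Real.hasDerivAt_rpow_const (Or.inl hz.ne')).const_mul a).neg.sub
      ((hasDerivAt_id z).const_mul ξ)
  convert h.exp using 1
  ring

theorem integral_Ioi_ramp_mul_exp_neg_mul_rpow {a p ξ ρ ϑ : ℝ} (ha : 0 ≤ a) (hp : 0 < p)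
    (hξ : 0 ≤ ξ) (hρ : 0 ≤ ρ) (hρϑ : ρ < ϑ) :
    ∫ z in Ioi 0, ramp ρ ϑ z * ((a * p * z ^ (p - 1) + ξ) * exp (-(a * z ^ p) - ξ * z))
      = 1 - (∫ z in ρ..ϑ, exp (-(a * z ^ p) - ξ * z)) / (ϑ - ρ) := by
  rw [integral_Ioi_ramp_mul (by fun_prop (disch := positivity))
    (fun z hz => hasDerivAt_exp_neg_mul_rpow_sub_mul hz) (fun z hz => by positivity) hρ hρϑ]
  simp [Real.zero_rpow hp.ne']

theorem ramp_eq_linear_of_pos {β : ℝ} (hβ : 0 < β) (θ t : ℝ) :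
    ramp (θ - √(π / 2) / β) (θ + √(π / 2) / β) t =
      if t ≤ θ - √(π / 2) / β then 1
      else if t < θ + √(π / 2) / β then 1 / 2 - β / √(2 * π) * (t - θ) else 0 := by
  have hsqrt : √(2 * π) = 2 * √(π / 2) := by
    rw [show 2 * π = 2 ^ 2 * (π / 2) by ring, Real.sqrt_mul (by positivity),
      Real.sqrt_sq zero_le_two]
  have hslope : (θ + √(π / 2) / β - t) / (θ + √(π / 2) / β - (θ - √(π / 2) / β))
      = 1 / 2 - β / √(2 * π) * (t - θ) := by
    rw [hsqrt]
    field_simp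
    ring
  rw [ramp, hslope]

theorem stmt_13_general
    (α ζ ξ : ℝ) (hα : 2 < α) (hζ : 0 < ζ) (hξ : 0 ≤ ξ)
    (f : ℝ → ℝ → ℝ)
    (hf : ∀ lam : ℝ, ∀ z > (0:ℝ), f lam z = (2 * ζ * lam / α * z ^ (2/α - 1) + ξ) *
      Real.exp (-(ζ * lam * z ^ (2/α)) - ξ * z))
    (n R θ β ϑ ρ : ℝ) (hn : 0 < n) (hR : 0 < R)
    (hβ : β = Real.sqrt (n / (2 * Real.pi)) * (2 ^ (2 * R) - 1) ^ (-(1:ℝ)/2))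
    (hϑ : ϑ = θ + Real.sqrt (Real.pi / 2) / β)
    (hρ : ρ = θ - Real.sqrt (Real.pi / 2) / β)
    (hρ0 : 0 ≤ ρ)
    (W : ℝ → ℝ)
    (hW : ∀ t, W t = if t ≤ ρ then 1
      else if t < ϑ then 1/2 - β / Real.sqrt (2 * Real.pi) * (t - θ) else 0) :
    ∀ lam₁ lam₂ : ℝ, 0 < lam₁ → lam₁ ≤ lam₂ →
      ∫ z in Set.Ioi (0:ℝ), W z * f lam₁ z ≤ ∫ z in Set.Ioi (0:ℝ), W z * f lam₂ z := by
  intro lam₁ lam₂ hlam₁ hlam₁₂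
  have hp : 0 < 2 / α := div_pos two_pos (by linarith)
  have hβ0 : 0 < β := by
    have : 1 < (2 : ℝ) ^ (2 * R) := Real.one_lt_rpow (by norm_num) (by positivity)
    rw [hβ]
    exact mul_pos (Real.sqrt_pos.2 (by positivity)) (Real.rpow_pos_of_pos (by linarith) _)
  have hρϑ : ρ < ϑ := by
    rw [hρ, hϑ]
    have : 0 < √(π / 2) / β := by positivity
    linarith
  have key : ∀ lam, 0 ≤ lam → ∫ z in Ioi 0, W z * f lam z
      = 1 - (∫ z in ρ..ϑ, exp (-(ζ * lam * z ^ (2 / α)) - ξ * z)) / (ϑ - ρ) := fun lam hlam => by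
    rw [← integral_Ioi_ramp_mul_exp_neg_mul_rpow (by positivity) hp hξ hρ0 hρϑ]
    refine setIntegral_congr_fun measurableSet_Ioi fun z hz => ?_
    rw [hW, hf lam z hz, hρ, hϑ, ramp_eq_linear_of_pos hβ0]
    ring
  rw [key lam₁ hlam₁.le, key lam₂ (hlam₁.le.trans hlam₁₂)]
  gcongr 1 - ?_ / _
  have hG : ∀ lam, Continuous fun z => exp (-(ζ * lam * z ^ (2 / α)) - ξ * z) :=
    fun lam => by fun_prop (disch := positivity)
  refine intervalIntegral.integral_mono_on hρϑ.le ((hG _).intervalIntegrable _ _)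
    ((hG _).intervalIntegrable _ _) fun z hz => ?_
  have : 0 ≤ z ^ (2 / α) := Real.rpow_nonneg (hρ0.trans hz.1) _
  gcongr

/-- The approximated outage probability is nondecreasing in the network
density: for `0 < λ₁ ≤ λ₂`, `∫_0^∞ W(z) f(z|λ₁) dz ≤ ∫_0^∞ W(z) f(z|λ₂) dz`. -/
theorem stmt_13
    (α ζ ξ : ℝ) (hα : 2 < α) (hζ : 0 < ζ) (hξ : 0 ≤ ξ)
    (f : ℝ → ℝ → ℝ)
    (hf : ∀ lam : ℝ, ∀ z > (0:ℝ), f lam z = (2 * ζ * lam / α * z ^ (2/α - 1) + ξ) *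
      Real.exp (-(ζ * lam * z ^ (2/α)) - ξ * z))
    (n R θ β ϑ ρ : ℝ) (hn : 0 < n) (hR : 0 < R)
    (hθ : θ = 2 ^ R - 1)
    (hβ : β = Real.sqrt (n / (2 * Real.pi)) * (2 ^ (2 * R) - 1) ^ (-(1:ℝ)/2))
    (hϑ : ϑ = θ + Real.sqrt (Real.pi / 2) / β)
    (hρ : ρ = θ - Real.sqrt (Real.pi / 2) / β)
    (hρ0 : 0 ≤ ρ)
    (W : ℝ → ℝ)
    (hW : ∀ t, W t = if t ≤ ρ then 1
      else if t < ϑ then 1/2 - β / Real.sqrt (2 * Real.pi) * (t - θ) else 0) :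
    ∀ lam₁ lam₂ : ℝ, 0 < lam₁ → lam₁ ≤ lam₂ →
      ∫ z in Set.Ioi (0:ℝ), W z * f lam₁ z ≤ ∫ z in Set.Ioi (0:ℝ), W z * f lam₂ z :=
  stmt_13_general α ζ ξ hα hζ hξ f hf n R θ β ϑ ρ hn hR hβ hϑ hρ hρ0 W hW
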